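/- arXiv:0802.4369 — 4 statements merged into one kernel-verified Lean document; each statement's English description precedes it below -/
import Mathlib

section
/- Let C be a closed T_f-invariant subset of X × G/H (i.e. T_f(C) = C) whose projection to X is a non-meager subset of X. Then there exists a compact set K ⊆ G/H such that (X × K) ∩ C projects onto the whole space X. -/
open Topology Pointwise Set Filter

section Defs

variable {X : Type*} [TopologicalSpace X] {G : Type*} [TopologicalSpace G] [Group G]

/-- The positive-iterate part of the cocycle generated by `f` over `T`:
`f(n,x) = f(T^{n-1}x) ⋯ f(Tx) · f(x)` for `n ≥ 1` and `f(0,x) = e`. -/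
def cocycleNat (T : X ≃ₜ X) (f : X → G) : ℕ → X → G
  | 0, _ => 1
  | n + 1, x => f ((T.toEquiv ^ n) x) * cocycleNat T f n x

/-- The cocycle generated by `f` over `T`, at integer times:
`f(n,x)` as above for `n ≥ 0` and `f(n,x) = f(-n, T^n x)⁻¹` for `n < 0`. -/
def cocycle (T : X ≃ₜ X) (f : X → G) (n : ℤ) (x : X) : G :=
  if 0 ≤ n then cocycleNat T f n.toNat x
  else (cocycleNat T f (-n).toNat ((T.toEquiv ^ n) x))⁻¹

/-- The `n`-th power of the skew product `T_f` on `X × G`: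
`T_f^n (x,g) = (T^n x, f(n,x)·g)`. -/
def skewPow (T : X ≃ₜ X) (f : X → G) (n : ℤ) (p : X × G) : X × G :=
  ((T.toEquiv ^ n) p.1, cocycle T f n p.1 * p.2)

/-- The `n`-th power of the skew product `T_f` acting on `X × G/H`:
`T_f^n (x, gH) = (T^n x, f(n,x)·gH)`. -/
def skewPowQ (T : X ≃ₜ X) (f : X → G) (H : Subgroup G) (n : ℤ) (p : X × (G ⧸ H)) :
    X × (G ⧸ H) :=
  ((T.toEquiv ^ n) p.1, cocycle T f n p.1 • p.2)

/-- The local essential range `E_x(f)`: all `g ∈ G` such that for every open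
neighbourhood `U` of `x` and every open neighbourhood `V` of the identity there are
`n ∈ ℤ` and `y ∈ U ∩ T⁻ⁿU` with `f(n,y) ∈ V·g`. -/
def essRange (T : X ≃ₜ X) (f : X → G) (x : X) : Set G :=
  {g | ∀ U : Set X, IsOpen U → x ∈ U → ∀ V : Set G, IsOpen V → (1 : G) ∈ V →
    ∃ n : ℤ, ∃ y ∈ U, (T.toEquiv ^ n) y ∈ U ∧ ∃ v ∈ V, cocycle T f n y = v * g}

/-- `P_x(f)`: the vertical section at `x` of the closure of the `T_f`-orbit of `(x,e)`. -/
def Pset (T : X ≃ₜ X) (f : X → G) (x : X) : Set G :=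
  {g | (x, g) ∈ closure (Set.range fun n : ℤ => skewPow T f n (x, 1))}

/-- `𝒟(f) = {x : E_x(f) = P_x(f)}`. -/
def Dset (T : X ≃ₜ X) (f : X → G) : Set X :=
  {x | essRange T f x = Pset T f x}

/-- Topological recurrence of the cocycle generated by `f`: for every open
neighbourhood `V` of the identity of `G` and every nonempty open `U ⊆ X` there is
`n ≠ 0` with `T⁻ⁿU ∩ U ∩ {x : f(n,x) ∈ V} ≠ ∅`. -/
def IsRecurrentCocycle (T : X ≃ₜ X) (f : X → G) : Prop :=
  ∀ V : Set G, IsOpen V → (1 : G) ∈ V → ∀ U : Set X, IsOpen U → U.Nonempty →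
    ∃ n : ℤ, n ≠ 0 ∧ ∃ x ∈ U, (T.toEquiv ^ n) x ∈ U ∧ cocycle T f n x ∈ V

/-- Minimality of a homeomorphism: every orbit is dense. -/
def IsMinimal (T : X ≃ₜ X) : Prop :=
  ∀ x : X, Dense (Set.range fun n : ℤ => (T.toEquiv ^ n) x)

/-- A consistent selection of subgroups for the cocycle generated by `f`: a family of
closed subgroups `H x ⊆ E_x(f)` with `H (Tⁿx) = f(n,x)·(H x)·f(n,x)⁻¹` depending
continuously on `x` for the Fell topology. -/
structure IsConsistentSelection (T : X ≃ₜ X) (f : X → G) (H : X → Subgroup G) : Prop where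
  isClosed : ∀ x : X, IsClosed (H x : Set G)
  subset_essRange : ∀ x : X, (H x : Set G) ⊆ essRange T f x
  conj : ∀ (x : X) (n : ℤ), (H ((T.toEquiv ^ n) x) : Set G) =
    (fun h => cocycle T f n x * h * (cocycle T f n x)⁻¹) '' (H x : Set G)
  fell_compact : ∀ (x : X) (K : Set G), IsCompact K → K ∩ (H x : Set G) = ∅ →
    ∃ W ∈ 𝓝 x, ∀ y ∈ W, K ∩ (H y : Set G) = ∅
  fell_open : ∀ (x : X) (O : Set G), IsOpen O → (O ∩ (H x : Set G)).Nonempty →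
    ∃ W ∈ 𝓝 x, ∀ y ∈ W, (O ∩ (H y : Set G)).Nonempty

/-- The `T_f`-orbit closure of a point of `X × G`. -/
def orbitClosure (T : X ≃ₜ X) (f : X → G) (p : X × G) : Set (X × G) :=
  closure (Set.range fun n : ℤ => skewPow T f n p)

/-- For `C ⊆ X × G`, the set `H = {g : C·g⁻¹ = C}`, where `C·g = {(y, c·g) : (y,c) ∈ C}`. -/
def stabSet (C : Set (X × G)) : Set G :=
  {g : G | (fun p : X × G => (p.1, p.2 * g⁻¹)) '' C = C}

/-- A strongly regular orbit closure: a `T_f`-orbit closure which projects onto all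
of `X` and all of whose vertical sections are single left cosets of
`H = {g : C·g⁻¹ = C}`. -/
def IsStronglyRegularOC (T : X ≃ₜ X) (f : X → G) (C : Set (X × G)) : Prop :=
  (∃ p : X × G, C = orbitClosure T f p) ∧ Prod.fst '' C = Set.univ ∧
    ∀ x : X, ∃ gx : G, {g : G | (x, g) ∈ C} = {gx} * stabSet C

/-- A strongly regular cocycle: one whose skew product admits a strongly regular
orbit closure. -/
def IsStronglyRegularCocycle (T : X ≃ₜ X) (f : X → G) : Prop :=
  ∃ C : Set (X × G), IsStronglyRegularOC T f C

/-- A regular cocycle: some `T_f`-orbit closure projects onto all of `X`. -/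
def IsRegularCocycle (T : X ≃ₜ X) (f : X → G) : Prop :=
  ∃ p : X × G, Prod.fst '' orbitClosure T f p = Set.univ

end Defs

/-!
Since `G ⧸ H` is σ-compact, the projection of `C` is a countable union of the closed sets
`π (C ∩ X × Kₙ)` with `Kₙ` compact. It is not meagre, so one of them, say for `K₀`, has nonempty
interior `U`. By minimality and compactness of `X`, finitely many sets `T⁻ᵐ U`, `m ∈ s`, cover `X`;
as `C` is `T_f`-invariant and `T_f` lies over `T`, every `x ∈ T⁻ᵐ U` is the first coordinate of a
point of `C ∩ T_f⁻ᵐ (X × K₀)`, so `K = ⋃_{m ∈ s} π₂ (T_f⁻ᵐ (X × K₀))` works.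
-/

section SkewProduct

variable {X Y : Type*} [TopologicalSpace X] [TopologicalSpace Y]

theorem exists_isCompact_interior_fst_image_inter_nonempty [CompactSpace X] [T2Space X]
    [SigmaCompactSpace Y] {C : Set (X × Y)} (hC : IsClosed C)
    (hCproj : ¬ IsMeagre (Prod.fst '' C)) :
    ∃ K : Set Y, IsCompact K ∧ (interior (Prod.fst '' (C ∩ univ ×ˢ K))).Nonempty := by
  by_contra! h
  have hpiece (n : ℕ) : IsMeagre (Prod.fst '' (C ∩ univ ×ˢ compactCovering Y n)) := by
    have hK := isCompact_compactCovering Y n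
    have hcl := (((isCompact_univ.prod hK).inter_left hC).image continuous_fst).isClosed
    exact (hcl.isNowhereDense_iff.mpr (h _ hK)).isMeagre
  refine hCproj ((isMeagre_iUnion hpiece).mono ?_)
  rintro _ ⟨p, hp, rfl⟩
  obtain ⟨n, hn⟩ := exists_mem_compactCovering p.2
  exact mem_iUnion.mpr ⟨n, p, ⟨hp, mem_univ _, hn⟩, rfl⟩

theorem Homeomorph.toEquiv_zpow (T : X ≃ₜ X) (n : ℤ) : (T ^ n).toEquiv = T.toEquiv ^ n :=
  map_zpow (MonoidHom.mk' Homeomorph.toEquiv fun _ _ => rfl) T n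

theorem IsMinimal.exists_finset_iUnion_preimage_eq_univ [CompactSpace X] {T : X ≃ₜ X}
    (hT : IsMinimal T) {U : Set X} (hU : IsOpen U) (hne : U.Nonempty) :
    ∃ s : Finset ℤ, ⋃ m ∈ s, (T ^ m) ⁻¹' U = univ := by
  have hcover : univ ⊆ ⋃ m : ℤ, (T ^ m) ⁻¹' U := by
    intro x _
    obtain ⟨_, ⟨m, rfl⟩, hm⟩ := (hT x).exists_mem_open hU hne
    have hm' : (T ^ m) x ∈ U := by rwa [← Homeomorph.coe_toEquiv, Homeomorph.toEquiv_zpow]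
    exact mem_iUnion.mpr ⟨m, hm'⟩
  obtain ⟨s, hs⟩ :=
    isCompact_univ.elim_finite_subcover _ (fun m => hU.preimage (T ^ m).continuous) hcover
  exact ⟨s, univ_subset_iff.mp hs⟩

/-- Pairs `(Φ, T)` with `Φ '' C = C` and `Φ` lying over `T`; as a subgroup, it transports both
properties to all integer powers `(Φ ^ n, T ^ n)` via `zpow_mem`. -/
def coveringStabilizer (C : Set (X × Y)) : Subgroup ((X × Y ≃ₜ X × Y) × (X ≃ₜ X)) where
  carrier := {q | q.1 '' C = C ∧ ∀ p, (q.1 p).1 = q.2 p.1}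
  one_mem' := ⟨image_id C, fun _ => rfl⟩
  mul_mem' := by
    rintro ⟨Φ, T⟩ ⟨Ψ, S⟩ ⟨hΦC, hΦ⟩ ⟨hΨC, hΨ⟩
    refine ⟨?_, fun p => ?_⟩
    · change Φ ∘ Ψ '' C = C
      rw [image_comp, hΨC, hΦC]
    · change (Φ (Ψ p)).1 = T (S p.1)
      rw [hΦ, hΨ]
  inv_mem' := by
    rintro ⟨Φ, T⟩ ⟨hΦC, hΦ⟩
    refine ⟨?_, fun p => ?_⟩
    · change Φ.symm '' C = C
      conv_lhs => rw [← hΦC]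
      exact Φ.symm_image_image C
    · change (Φ.symm p).1 = T.symm p.1
      rw [T.eq_symm_apply, ← hΦ, Φ.apply_symm_apply]

theorem exists_isCompact_fst_image_inter_eq_univ [CompactSpace X] {T : X ≃ₜ X}
    (hT : IsMinimal T) {Φ : X × Y ≃ₜ X × Y} {C : Set (X × Y)}
    (hΦ : (Φ, T) ∈ coveringStabilizer C) {K₀ : Set Y} (hK₀ : IsCompact K₀)
    (hU : (interior (Prod.fst '' (C ∩ univ ×ˢ K₀))).Nonempty) :
    ∃ K : Set Y, IsCompact K ∧ Prod.fst '' (C ∩ univ ×ˢ K) = univ := by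
  obtain ⟨s, hs⟩ := hT.exists_finset_iUnion_preimage_eq_univ isOpen_interior hU
  refine ⟨⋃ m ∈ s, Prod.snd '' ((Φ ^ (-m)) '' univ ×ˢ K₀), ?_, eq_univ_of_forall fun x => ?_⟩
  · exact s.finite_toSet.isCompact_biUnion fun m _ =>
      (((isCompact_univ.prod hK₀).image (Φ ^ (-m)).continuous).image continuous_snd)
  obtain ⟨m, hm, hxm⟩ := mem_iUnion₂.mp (hs ▸ mem_univ x)
  obtain ⟨p, ⟨hpC, hpK₀⟩, hpx⟩ := interior_subset hxm
  obtain ⟨hC, hfst⟩ := zpow_mem hΦ (-m)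
  refine ⟨(Φ ^ (-m)) p, ⟨hC ▸ mem_image_of_mem _ hpC, mem_univ _, ?_⟩, ?_⟩
  · exact mem_biUnion hm (mem_image_of_mem _ (mem_image_of_mem _ hpK₀))
  · rw [Prod.pow_snd, Prod.pow_fst] at hfst
    rw [hfst, hpx, ← Homeomorph.mul_apply, ← zpow_add, neg_add_cancel, zpow_zero,
      Homeomorph.one_apply]

def Homeomorph.skewProduct {G : Type*} [TopologicalSpace G] [Group G] [ContinuousInv G]
    [MulAction G Y] [ContinuousSMul G Y] (T : X ≃ₜ X) {f : X → G} (hf : Continuous f) :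
    X × Y ≃ₜ X × Y where
  toFun p := (T p.1, f p.1 • p.2)
  invFun p := (T.symm p.1, (f (T.symm p.1))⁻¹ • p.2)
  left_inv p := by simp
  right_inv p := by simp
  continuous_toFun := by fun_prop
  continuous_invFun := by fun_prop

end SkewProduct

theorem statement_0_general
    {X : Type*} [TopologicalSpace X] [CompactSpace X] [TopologicalSpace.MetrizableSpace X]
    {G : Type*} [TopologicalSpace G] [Group G] [IsTopologicalGroup G]
    [LocallyCompactSpace G] [SecondCountableTopology G]
    (T : X ≃ₜ X) (hT : IsMinimal T) (f : X → G) (hf : Continuous f)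
    (H : Subgroup G)
    (C : Set (X × (G ⧸ H))) (hCcl : IsClosed C)
    (hCinv : (fun p : X × (G ⧸ H) => (T p.1, f p.1 • p.2)) '' C = C)
    (hCproj : ¬ IsMeagre (Prod.fst '' C)) :
    ∃ K : Set (G ⧸ H), IsCompact K ∧
      Prod.fst '' (C ∩ (Set.univ ×ˢ K)) = Set.univ := by
  obtain ⟨K₀, hK₀, hU⟩ := exists_isCompact_interior_fst_image_inter_nonempty hCcl hCproj
  have hΦ : (Homeomorph.skewProduct T hf, T) ∈ coveringStabilizer C := ⟨hCinv, fun _ => rfl⟩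
  exact exists_isCompact_fst_image_inter_eq_univ hT hΦ hK₀ hU

theorem statement_0
    {X : Type*} [TopologicalSpace X] [CompactSpace X] [TopologicalSpace.MetrizableSpace X]
    {G : Type*} [TopologicalSpace G] [Group G] [IsTopologicalGroup G]
    [LocallyCompactSpace G] [SecondCountableTopology G] [T2Space G]
    (T : X ≃ₜ X) (hT : IsMinimal T) (f : X → G) (hf : Continuous f)
    (H : Subgroup G) (hHcl : IsClosed (H : Set G))
    (C : Set (X × (G ⧸ H))) (hCcl : IsClosed C)
    (hCinv : (fun p : X × (G ⧸ H) => (T p.1, f p.1 • p.2)) '' C = C)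
    (hCproj : ¬ IsMeagre (Prod.fst '' C)) :
    ∃ K : Set (G ⧸ H), IsCompact K ∧
      Prod.fst '' (C ∩ (Set.univ ×ˢ K)) = Set.univ :=
  statement_0_general T hT f hf H C hCcl hCinv hCproj
end

section
/- Let {H_x}_{x∈X} be a consistent selection of subgroups for the cocycle f, and let U be any relatively compact open subset of G. Then the set M_U = {x ∈ X : E_x(f) ∩ (cl(U)·H_x \ U·H_x) = ∅} is open in X, where cl(U) denotes the closure of U in G. -/
open Topology Pointwise Set Filter

/-! Let `R(U)` be the set of values `f(n,y)` of the cocycle along returns `y ∈ U`, `Tⁿy ∈ U`.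
Then `E_x(f) = ⋂_{U ∈ 𝓝 x} cl R(U)`, so the graph of `x ↦ E_x(f)` is closed. Preceding a return
that starts at `y₁` near `y` and realises `e ∈ E_y(f)` by a return close to `y₁` realising an
element of `H_{y₁} ⊆ E_{y₁}(f)` close to `h ∈ H_y` (lower semicontinuity of `H`) shows
`E_y(f) · H_y ⊆ E_y(f)`; hence `x ∈ M_U` iff `E_x(f) ∩ cl U ⊆ U · H_x`. The graph of
`x ↦ U · H_x` is open, again by lower semicontinuity of `H`, and compactness of `cl U` turns these
two facts into openness of `M_U`. -/

namespace Homeomorph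

variable {X : Type*} [TopologicalSpace X]

theorem toEquiv_zpow_s1 (T : X ≃ₜ X) (n : ℤ) : (T ^ n).toEquiv = T.toEquiv ^ n :=
  map_zpow (MonoidHom.mk' Homeomorph.toEquiv fun _ _ => rfl) T n

theorem continuous_toEquiv_zpow (T : X ≃ₜ X) (n : ℤ) : Continuous (T.toEquiv ^ n) := by
  rw [← toEquiv_zpow_s1]
  exact (T ^ n).continuous

end Homeomorph

section Cocycle

variable {X : Type*} [TopologicalSpace X] {G : Type*} [Group G] (T : X ≃ₜ X) (f : X → G)

theorem cocycleNat_add (m n : ℕ) (x : X) :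
    cocycleNat T f (m + n) x = cocycleNat T f m ((T.toEquiv ^ n) x) * cocycleNat T f n x := by
  induction m with
  | zero => simp [cocycleNat]
  | succ m ih =>
    rw [Nat.add_right_comm]
    simp only [cocycleNat, ih, pow_add, Equiv.Perm.mul_apply, mul_assoc]

theorem cocycle_natCast (n : ℕ) (x : X) : cocycle T f n x = cocycleNat T f n x := by
  simp [cocycle]

theorem cocycle_neg_natCast (n : ℕ) (x : X) :
    cocycle T f (-n) x = (cocycleNat T f n ((T.toEquiv ^ (-n : ℤ)) x))⁻¹ := by
  cases n with
  | zero => simp [cocycle, cocycleNat]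
  | succ n => rw [cocycle, if_neg (by omega), neg_neg, Int.toNat_natCast]

theorem cocycle_succ (n : ℤ) (x : X) :
    cocycle T f (n + 1) x = f ((T.toEquiv ^ n) x) * cocycle T f n x := by
  obtain ⟨n, rfl | rfl⟩ := Int.eq_nat_or_neg n
  · rw [← Nat.cast_succ, cocycle_natCast, cocycle_natCast, zpow_natCast]
    rfl
  · cases n with
    | zero => simp [cocycle, cocycleNat]
    | succ n =>
      rw [show -((n + 1 : ℕ) : ℤ) + 1 = -n by push_cast; ring, cocycle_neg_natCast,
        cocycle_neg_natCast, cocycleNat_add T f n 1]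
      have hshift :
          (T.toEquiv ^ 1) ((T.toEquiv ^ (-((n + 1 : ℕ) : ℤ))) x) = (T.toEquiv ^ (-n : ℤ)) x := by
        rw [← Equiv.Perm.mul_apply, ← zpow_natCast, ← zpow_add]
        push_cast
        ring_nf
      rw [hshift]
      simp [cocycleNat]

theorem cocycle_add (m n : ℤ) (x : X) :
    cocycle T f (m + n) x = cocycle T f m ((T.toEquiv ^ n) x) * cocycle T f n x := by
  induction m using Int.induction_on with
  | zero => simp [cocycle, cocycleNat]
  | succ m ih =>
    rw [add_right_comm, cocycle_succ, ih, cocycle_succ, ← Equiv.Perm.mul_apply, ← zpow_add,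
      mul_assoc]
  | pred m ih =>
    have h₁ := cocycle_succ T f (-m - 1 + n) x
    have h₂ := cocycle_succ T f (-m - 1) ((T.toEquiv ^ n) x)
    rw [sub_add_cancel] at h₂
    rw [show -(m : ℤ) - 1 + n + 1 = -m + n by ring, ih, h₂, ← Equiv.Perm.mul_apply, ← zpow_add,
      mul_assoc] at h₁
    exact (mul_left_cancel h₁).symm

def returnValues (U : Set X) : Set G :=
  {g | ∃ n : ℤ, ∃ y ∈ U, (T.toEquiv ^ n) y ∈ U ∧ cocycle T f n y = g}

theorem returnValues_mono {U U' : Set X} (h : U ⊆ U') :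
    returnValues T f U ⊆ returnValues T f U' :=
  fun _ ⟨n, y, hy, hny, hg⟩ => ⟨n, y, h hy, h hny, hg⟩

variable [TopologicalSpace G] [IsTopologicalGroup G] {f}

theorem continuous_cocycleNat (hf : Continuous f) (n : ℕ) : Continuous (cocycleNat T f n) := by
  induction n with
  | zero => exact continuous_const
  | succ n ih => exact (hf.comp (by simpa using T.continuous_toEquiv_zpow n)).mul ih

theorem continuous_cocycle (hf : Continuous f) (n : ℤ) : Continuous (cocycle T f n) := by
  obtain ⟨n, rfl | rfl⟩ := Int.eq_nat_or_neg n
  · exact (continuous_cocycleNat T hf n).congr fun x => (cocycle_natCast T f n x).symm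
  · exact ((continuous_cocycleNat T hf n).comp (T.continuous_toEquiv_zpow _)).inv.congr
      fun x => (cocycle_neg_natCast T f n x).symm

end Cocycle

section EssentialRange

variable {X : Type*} [TopologicalSpace X] {G : Type*} [TopologicalSpace G] [Group G]
  [IsTopologicalGroup G] (T : X ≃ₜ X) (f : X → G)

theorem mem_essRange_iff {x : X} {g : G} :
    g ∈ essRange T f x ↔ ∀ U ∈ 𝓝 x, g ∈ closure (returnValues T f U) := by
  constructor
  · intro hg U hU
    obtain ⟨U', hU'U, hU'o, hxU'⟩ := mem_nhds_iff.1 hU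
    refine mem_closure_iff_nhds.2 fun W hW => ?_
    obtain ⟨n, y, hy, hny, v, hv, hc⟩ := hg U' hU'o hxU' ((· * g) ⁻¹' interior W)
      (isOpen_interior.preimage (continuous_mul_const g))
      (by simpa using mem_interior_iff_mem_nhds.2 hW)
    exact ⟨_, hc ▸ interior_subset hv, returnValues_mono T f hU'U ⟨n, y, hy, hny, rfl⟩⟩
  · intro hg U hUo hxU V hVo hV1
    obtain ⟨_, hcV, n, y, hy, hny, rfl⟩ := mem_closure_iff_nhds.1 (hg U (hUo.mem_nhds hxU))
      ((· * g⁻¹) ⁻¹' V) ((hVo.preimage (continuous_mul_const g⁻¹)).mem_nhds (by simpa using hV1))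
    exact ⟨n, y, hy, hny, _, hcV, by group⟩

theorem isClosed_setOf_mem_essRange : IsClosed {p : X × G | p.2 ∈ essRange T f p.1} := by
  refine isOpen_compl_iff.1 (isOpen_iff_mem_nhds.2 fun ⟨x, g⟩ hg => ?_)
  obtain ⟨U, hU, hgU⟩ : ∃ U ∈ 𝓝 x, g ∉ closure (returnValues T f U) := by
    simpa [mem_essRange_iff] using hg
  filter_upwards [prod_mem_nhds (eventually_mem_nhds_iff.2 hU)
    (isClosed_closure.isOpen_compl.mem_nhds hgU)] with ⟨y, g'⟩ ⟨hy, hg'⟩ hmem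
  exact hg' ((mem_essRange_iff T f).1 hmem U hy)

variable {T f}

theorem mul_mem_essRange_of_eventually (hf : Continuous f) {y : X} {e a : G}
    (he : e ∈ essRange T f y)
    (ha : ∀ O : Set G, IsOpen O → a ∈ O → ∀ᶠ z in 𝓝 y, (O ∩ essRange T f z).Nonempty) :
    e * a ∈ essRange T f y := by
  refine (mem_essRange_iff T f).2 fun U hU => mem_closure_iff_nhds.2 fun W hW => ?_
  obtain ⟨We, Wa, hWeo, heWe, hWao, haWa, hWeWa⟩ :=
    mem_nhds_prod_iff'.1 (continuous_mul.continuousAt.preimage_mem_nhds hW)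
  obtain ⟨U', hU'sub, hU'o, hyU'⟩ := mem_nhds_iff.1 (inter_mem hU (ha Wa hWao haWa))
  obtain ⟨_, hcWe, n, y₁, hy₁, hny₁, rfl⟩ :=
    mem_closure_iff_nhds.1 ((mem_essRange_iff T f).1 he U' (hU'o.mem_nhds hyU')) We
      (hWeo.mem_nhds heWe)
  obtain ⟨t, htWa, htE⟩ := (hU'sub hy₁).2
  let U₁ := U' ∩ (T.toEquiv ^ n) ⁻¹' U' ∩ cocycle T f n ⁻¹' We
  have hU₁ : U₁ ∈ 𝓝 y₁ :=
    ((hU'o.inter (hU'o.preimage (T.continuous_toEquiv_zpow n))).inter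
      (hWeo.preimage (continuous_cocycle T hf n))).mem_nhds ⟨⟨hy₁, hny₁⟩, hcWe⟩
  obtain ⟨_, hrWa, l, z, ⟨⟨hz, -⟩, -⟩, ⟨⟨-, hnlz⟩, hlzWe⟩, rfl⟩ :=
    mem_closure_iff_nhds.1 ((mem_essRange_iff T f).1 htE U₁ hU₁) Wa (hWao.mem_nhds htWa)
  refine ⟨_, hWeWa (mk_mem_prod hlzWe hrWa), n + l, z, (hU'sub hz).1, ?_, ?_⟩
  · rw [zpow_add, Equiv.Perm.mul_apply]
    exact (hU'sub hnlz).1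
  · exact cocycle_add T f n l z

theorem mul_mem_essRange_of_mem_selection (hf : Continuous f) {H : X → Subgroup G}
    (hH : IsConsistentSelection T f H) {y : X} {e h : G} (he : e ∈ essRange T f y)
    (hh : h ∈ H y) : e * h ∈ essRange T f y := by
  refine mul_mem_essRange_of_eventually hf he fun O hOo hhO => ?_
  obtain ⟨W, hW, hWO⟩ := hH.fell_open y O hOo ⟨h, hhO, hh⟩
  filter_upwards [hW] with z hz
  obtain ⟨t, htO, htH⟩ := hWO z hz
  exact ⟨t, htO, hH.subset_essRange z htH⟩

end EssentialRange

section Fell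

variable {X : Type*} [TopologicalSpace X] {G : Type*} [TopologicalSpace G] [Group G]
  [IsTopologicalGroup G]

theorem isOpen_setOf_mem_mul {H : X → Set G} {U : Set G} (hU : IsOpen U)
    (hH : ∀ (x : X) (O : Set G), IsOpen O → (O ∩ H x).Nonempty →
      ∃ W ∈ 𝓝 x, ∀ y ∈ W, (O ∩ H y).Nonempty) :
    IsOpen {p : X × G | p.2 ∈ U * H p.1} := by
  refine isOpen_iff_mem_nhds.2 ?_
  rintro ⟨x, g⟩ ⟨u, hu, h, hh, hg : u * h = g⟩
  obtain ⟨Ng, Nh, hNgo, hgNg, hNho, hhNh, hN⟩ : ∃ Ng Nh : Set G, IsOpen Ng ∧ g ∈ Ng ∧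
      IsOpen Nh ∧ h ∈ Nh ∧ Ng ×ˢ Nh ⊆ (fun q : G × G => q.1 * q.2⁻¹) ⁻¹' U :=
    mem_nhds_prod_iff'.1 ((continuous_fst.mul continuous_snd.inv).continuousAt.preimage_mem_nhds
      (hU.mem_nhds (by simpa [← hg] using hu)))
  obtain ⟨W, hW, hWNh⟩ := hH x Nh hNho ⟨h, hhNh, hh⟩
  filter_upwards [prod_mem_nhds hW (hNgo.mem_nhds hgNg)] with ⟨y, g'⟩ ⟨hy, hg'⟩
  obtain ⟨h', hh'Nh, hh'H⟩ := hWNh y hy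
  exact ⟨_, hN (mk_mem_prod hg' hh'Nh), h', hh'H, inv_mul_cancel_right g' h'⟩

end Fell

theorem inter_mul_diff_eq_empty_iff {G : Type*} [Group G] {E C S : Set G} {H : Subgroup G}
    (hE : ∀ e ∈ E, ∀ h ∈ H, e * h ∈ E) :
    E ∩ ((C * (H : Set G)) \ (S * (H : Set G))) = ∅ ↔ E ∩ C ⊆ S * (H : Set G) := by
  refine ⟨fun h g ⟨hgE, hgC⟩ => ?_, fun h => eq_empty_iff_forall_notMem.2 ?_⟩
  · by_contra hgS
    exact h.subset ⟨hgE, ⟨g, hgC, 1, H.one_mem, mul_one g⟩, hgS⟩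
  · rintro _ ⟨hE', ⟨c, hc, k, hk, rfl⟩, hS⟩
    have hcS : c ∈ S * H := h ⟨by simpa using hE _ hE' k⁻¹ (H.inv_mem hk), hc⟩
    exact hS (by simpa [mul_assoc, coe_mul_coe] using mul_mem_mul hcS hk)

theorem statement_1_general
    {X : Type*} [TopologicalSpace X]
    {G : Type*} [TopologicalSpace G] [Group G] [IsTopologicalGroup G]
    (T : X ≃ₜ X) (f : X → G) (hf : Continuous f)
    (H : X → Subgroup G) (hH : IsConsistentSelection T f H)
    (U : Set G) (hUopen : IsOpen U) (hUrc : IsCompact (closure U)) :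
    IsOpen {x : X |
      essRange T f x ∩ ((closure U * (H x : Set G)) \ (U * (H x : Set G))) = ∅} := by
  simp_rw [inter_mul_diff_eq_empty_iff fun e he h hh =>
    mul_mem_essRange_of_mem_selection hf hH he hh]
  refine isOpen_iff_eventually.2 fun x₀ hx₀ => ?_
  have hlocal : ∀ᶠ x in 𝓝 x₀, ∀ g ∈ closure U, g ∈ essRange T f x → g ∈ U * (H x : Set G) := by
    refine hUrc.eventually_forall_of_forall_eventually fun g hg => ?_
    by_cases hgE : g ∈ essRange T f x₀
    · filter_upwards [(isOpen_setOf_mem_mul hUopen hH.fell_open).mem_nhds (hx₀ ⟨hgE, hg⟩)]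
        with p hp _ using hp
    · filter_upwards [(isClosed_setOf_mem_essRange T f).isOpen_compl.mem_nhds hgE]
        with p hp hpE using absurd hpE hp
  filter_upwards [hlocal] with x hx g ⟨hgE, hgU⟩ using hx g hgU hgE

theorem statement_1
    {X : Type*} [TopologicalSpace X] [CompactSpace X] [TopologicalSpace.MetrizableSpace X]
    {G : Type*} [TopologicalSpace G] [Group G] [IsTopologicalGroup G]
    [LocallyCompactSpace G] [SecondCountableTopology G] [T2Space G]
    (T : X ≃ₜ X) (hT : IsMinimal T) (f : X → G) (hf : Continuous f)
    (H : X → Subgroup G) (hH : IsConsistentSelection T f H)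
    (U : Set G) (hUopen : IsOpen U) (hUrc : IsCompact (closure U)) :
    IsOpen {x : X |
      essRange T f x ∩ ((closure U * (H x : Set G)) \ (U * (H x : Set G))) = ∅} :=
  statement_1_general T f hf H hH U hUopen hUrc
end

section
/- The cocycle f is recurrent if and only if the skew product T_f is topologically conservative (regionally recurrent), i.e. for every nonempty open set 𝒪 ⊆ X × G there is an integer n ≠ 0 with T_f^n(𝒪) ∩ 𝒪 ≠ ∅. -/
open Topology Pointwise Set Filter

/-!
Both directions come from comparing open sets of `X × G` with product boxes `U ×ˢ W`.
If `(x, g)` and `T_f^n (x, g) = (Tⁿx, f(n,x)·g)` both lie in `U ×ˢ W`, then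
`f(n,x) = (f(n,x)·g)·g⁻¹ ∈ W·W⁻¹`; conversely, a return `f(n,x) ∈ W'·g₀⁻¹` of the cocycle
sends `(x, g₀)` back into `U ×ˢ W'`.
-/

section Conservative

variable {X : Type*} [TopologicalSpace X] {G : Type*} [TopologicalSpace G] [Group G]
  {T : X ≃ₜ X} {f : X → G}

theorem IsRecurrentCocycle.exists_skewPow_image_inter_nonempty [ContinuousMul G]
    (hrec : IsRecurrentCocycle T f) {O : Set (X × G)} (hO : IsOpen O) (hne : O.Nonempty) :
    ∃ n : ℤ, n ≠ 0 ∧ ((skewPow T f n '' O) ∩ O).Nonempty := by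
  obtain ⟨⟨x₀, g₀⟩, hp⟩ := hne
  obtain ⟨U, W, hU, hW, hx₀, hg₀, hUW⟩ := isOpen_prod_iff.1 hO x₀ g₀ hp
  obtain ⟨n, hn, x, hxU, hTxU, hxW⟩ :=
    hrec _ (hW.preimage (continuous_mul_const g₀)) (by simpa using hg₀) U hU ⟨x₀, hx₀⟩
  exact ⟨n, hn, _, ⟨(x, g₀), hUW ⟨hxU, hg₀⟩, rfl⟩, hUW ⟨hTxU, hxW⟩⟩

theorem isRecurrentCocycle_of_exists_skewPow_image_inter_nonempty [IsTopologicalGroup G]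
    (hcons : ∀ O : Set (X × G), IsOpen O → O.Nonempty →
      ∃ n : ℤ, n ≠ 0 ∧ ((skewPow T f n '' O) ∩ O).Nonempty) :
    IsRecurrentCocycle T f := by
  intro V hV h1V U hU ⟨x₀, hx₀⟩
  obtain ⟨W', hW', hdiv⟩ := exists_nhds_split_inv (hV.mem_nhds h1V)
  obtain ⟨W, hWW', hW, h1W⟩ := mem_nhds_iff.1 hW'
  obtain ⟨n, hn, -, ⟨⟨x, g⟩, ⟨hxU, hgW⟩, rfl⟩, hTxU, hfgW⟩ :=
    hcons (U ×ˢ W) (hU.prod hW) ⟨(x₀, 1), hx₀, h1W⟩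
  refine ⟨n, hn, x, hxU, hTxU, ?_⟩
  simpa [skewPow] using hdiv _ (hWW' hfgW) _ (hWW' hgW)

end Conservative

theorem statement_11_general
    {X : Type*} [TopologicalSpace X]
    {G : Type*} [TopologicalSpace G] [Group G] [IsTopologicalGroup G]
    (T : X ≃ₜ X) (f : X → G)
 :
    IsRecurrentCocycle T f ↔
      ∀ O : Set (X × G), IsOpen O → O.Nonempty →
        ∃ n : ℤ, n ≠ 0 ∧ ((skewPow T f n '' O) ∩ O).Nonempty :=
  ⟨fun hrec _ hO hne => hrec.exists_skewPow_image_inter_nonempty hO hne,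
    isRecurrentCocycle_of_exists_skewPow_image_inter_nonempty⟩

theorem statement_11
    {X : Type*} [TopologicalSpace X] [CompactSpace X] [TopologicalSpace.MetrizableSpace X]
    {G : Type*} [TopologicalSpace G] [Group G] [IsTopologicalGroup G]
    [LocallyCompactSpace G] [SecondCountableTopology G] [T2Space G]
    (T : X ≃ₜ X) (hT : IsMinimal T) (f : X → G) (hf : Continuous f)
 :
    IsRecurrentCocycle T f ↔
      ∀ O : Set (X × G), IsOpen O → O.Nonempty →
        ∃ n : ℤ, n ≠ 0 ∧ ((skewPow T f n '' O) ∩ O).Nonempty :=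
  statement_11_general T f
end

section
/- Let b : X → G be continuous and define the cohomologous cocycle generated by f̃(x) = b(Tx)·f(x)·b(x)^{-1}, so that f̃(n,x) = b(T^n x)·f(n,x)·b(x)^{-1} for all n ∈ ℤ and x ∈ X. If f̃ is strongly regular, then f is strongly regular. -/
open Topology Pointwise Set Filter

/-!
Cohomologous cocycles have conjugate skew products: the fibrewise translation
`Φ (x, g) = (x, b(x)⁻¹ g)` is a homeomorphism of `X × G` with `Φ ∘ T_f̃ = T_f ∘ Φ`. Hence `Φ` maps
orbit closures of `T_f̃` onto orbit closures of `T_f`; it preserves the projection to `X`,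
commutes with right translations (so it preserves `H`), and translates each section `C_x` on the
left by `b(x)⁻¹`, which keeps it a single left coset of `H`.
-/

section Cohomologous

variable {X : Type*} [TopologicalSpace X] {G : Type*} [Group G]

lemma cocycleNat_cohomologous (T : X ≃ₜ X) (f b : X → G) (n : ℕ) (x : X) :
    cocycleNat T (fun x => b (T x) * f x * (b x)⁻¹) n x
      = b ((T.toEquiv ^ n) x) * cocycleNat T f n x * (b x)⁻¹ := by
  induction n with
  | zero => simp [cocycleNat]
  | succ n ih =>
    have hT : T ((T.toEquiv ^ n) x) = (T.toEquiv ^ (n + 1)) x := by simp [pow_succ']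
    simp only [cocycleNat, ih, ← hT]
    group

lemma cocycle_cohomologous (T : X ≃ₜ X) (f b : X → G) (n : ℤ) (x : X) :
    cocycle T (fun x => b (T x) * f x * (b x)⁻¹) n x
      = b ((T.toEquiv ^ n) x) * cocycle T f n x * (b x)⁻¹ := by
  unfold cocycle
  split_ifs with hn
  · rw [cocycleNat_cohomologous, ← zpow_natCast, Int.toNat_of_nonneg hn]
  · have hback : (T.toEquiv ^ (-n).toNat) ((T.toEquiv ^ n) x) = x := by
      rw [← zpow_natCast, Int.toNat_of_nonneg (by omega), zpow_neg]
      exact (T.toEquiv ^ n).symm_apply_apply x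
    simp only [cocycleNat_cohomologous, hback]
    group

variable [TopologicalSpace G] [IsTopologicalGroup G]

def fiberwiseMulLeft (c : X → G) (hc : Continuous c) : X × G ≃ₜ X × G where
  toFun p := (p.1, c p.1 * p.2)
  invFun p := (p.1, (c p.1)⁻¹ * p.2)
  left_inv p := by simp
  right_inv p := by simp
  continuous_toFun := by fun_prop
  continuous_invFun := by fun_prop

@[simp]
lemma fiberwiseMulLeft_apply (c : X → G) (hc : Continuous c) (p : X × G) :
    fiberwiseMulLeft c hc p = (p.1, c p.1 * p.2) :=
  rfl

@[simp]
lemma fiberwiseMulLeft_symm_apply (c : X → G) (hc : Continuous c) (p : X × G) :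
    (fiberwiseMulLeft c hc).symm p = (p.1, (c p.1)⁻¹ * p.2) :=
  rfl

lemma fiberwiseMulLeft_skewPow_cohomologous (T : X ≃ₜ X) (f b : X → G) (hb : Continuous b)
    (n : ℤ) (p : X × G) :
    fiberwiseMulLeft (fun x => (b x)⁻¹) hb.inv
        (skewPow T (fun x => b (T x) * f x * (b x)⁻¹) n p)
      = skewPow T f n (fiberwiseMulLeft (fun x => (b x)⁻¹) hb.inv p) := by
  simp only [fiberwiseMulLeft_apply, skewPow, cocycle_cohomologous, Prod.mk.injEq, true_and]
  group

lemma image_fiberwiseMulLeft_orbitClosure_cohomologous (T : X ≃ₜ X) (f b : X → G)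
    (hb : Continuous b) (p : X × G) :
    fiberwiseMulLeft (fun x => (b x)⁻¹) hb.inv ''
        orbitClosure T (fun x => b (T x) * f x * (b x)⁻¹) p
      = orbitClosure T f (fiberwiseMulLeft (fun x => (b x)⁻¹) hb.inv p) := by
  rw [orbitClosure, orbitClosure, Homeomorph.image_closure, ← Set.range_comp]
  exact congrArg (closure ∘ Set.range)
    (funext (fiberwiseMulLeft_skewPow_cohomologous T f b hb · p))

lemma fst_image_fiberwiseMulLeft (c : X → G) (hc : Continuous c) (C : Set (X × G)) :
    Prod.fst '' (fiberwiseMulLeft c hc '' C) = Prod.fst '' C := by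
  rw [← Set.image_comp]
  rfl

lemma stabSet_image_fiberwiseMulLeft (c : X → G) (hc : Continuous c) (C : Set (X × G)) :
    stabSet (fiberwiseMulLeft c hc '' C) = stabSet C := by
  ext g
  set Φ := fiberwiseMulLeft c hc
  set R : X × G → X × G := fun p => (p.1, p.2 * g⁻¹)
  have hcomm : R ∘ Φ = Φ ∘ R := by
    funext p
    simp [Φ, R, mul_assoc]
  change R '' (Φ '' C) = Φ '' C ↔ R '' C = C
  rw [← Set.image_comp, hcomm, Set.image_comp]
  exact (Set.image_injective.mpr Φ.injective).eq_iff

lemma section_image_fiberwiseMulLeft (c : X → G) (hc : Continuous c) (C : Set (X × G))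
    (x : X) :
    {g | (x, g) ∈ fiberwiseMulLeft c hc '' C} = {c x} * {g | (x, g) ∈ C} := by
  ext g
  rw [Homeomorph.image_eq_preimage_symm, Set.singleton_mul, Set.image_mul_left]
  simp

lemma IsStronglyRegularOC.image_fiberwiseMulLeft_cohomologous {T : X ≃ₜ X} {f b : X → G}
    (hb : Continuous b) {C : Set (X × G)}
    (hC : IsStronglyRegularOC T (fun x => b (T x) * f x * (b x)⁻¹) C) :
    IsStronglyRegularOC T f (fiberwiseMulLeft (fun x => (b x)⁻¹) hb.inv '' C) := by
  obtain ⟨⟨p, rfl⟩, hsurj, hcoset⟩ := hC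
  refine ⟨⟨_, image_fiberwiseMulLeft_orbitClosure_cohomologous T f b hb p⟩,
    by rw [fst_image_fiberwiseMulLeft, hsurj], fun x => ?_⟩
  obtain ⟨gx, hgx⟩ := hcoset x
  refine ⟨(b x)⁻¹ * gx, ?_⟩
  rw [section_image_fiberwiseMulLeft, stabSet_image_fiberwiseMulLeft, hgx, ← mul_assoc,
    Set.singleton_mul_singleton]

end Cohomologous

theorem statement_18_general
    {X : Type*} [TopologicalSpace X]
    {G : Type*} [TopologicalSpace G] [Group G] [IsTopologicalGroup G]
    (T : X ≃ₜ X) (f : X → G)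
    (b : X → G) (hb : Continuous b)
    (hreg : IsStronglyRegularCocycle T (fun x : X => b (T x) * f x * (b x)⁻¹)) :
    IsStronglyRegularCocycle T f := by
  obtain ⟨C, hC⟩ := hreg
  exact ⟨_, hC.image_fiberwiseMulLeft_cohomologous hb⟩

theorem statement_18
    {X : Type*} [TopologicalSpace X] [CompactSpace X] [TopologicalSpace.MetrizableSpace X]
    {G : Type*} [TopologicalSpace G] [Group G] [IsTopologicalGroup G]
    [LocallyCompactSpace G] [SecondCountableTopology G] [T2Space G]
    (T : X ≃ₜ X) (hT : IsMinimal T) (f : X → G) (hf : Continuous f)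
    (b : X → G) (hb : Continuous b)
    (hreg : IsStronglyRegularCocycle T (fun x : X => b (T x) * f x * (b x)⁻¹)) :
    IsStronglyRegularCocycle T f :=
  statement_18_general T f b hb hreg
end
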